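/- arXiv:0902.0561 — 2 statements merged into one kernel-verified Lean document; each statement's English description precedes it below -/
import Mathlib

section
/- For every unit vector a in ℓ²(ℤ), the orbit G(T₊, U(2))·a of a under the group G(T₊, U(2)) of unitary operators generated by the bilateral shift T₊ and the unitaries acting as U(2) on span{e₀, e₁}, is dense (in the norm topology) in the unit sphere of ℓ²(ℤ). In other words, the family G(T₊, U(2)) is universal on the Hilbert sphere and every unit vector is a universal element. -/
noncomputable section
open scoped InnerProductSpace
open Complex

abbrev H2 : Type := lp (fun _ : ℤ => ℂ) 2
def e (k : ℤ) : H2 := lp.single 2 k (1 : ℂ)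

def spanE01 : Submodule ℂ H2 := Submodule.span ℂ {e 0, e 1}

def U2 : Set (unitary (H2 →L[ℂ] H2)) :=
  {g | (∀ x ∈ spanE01, (g : H2 →L[ℂ] H2) x ∈ spanE01) ∧
       ∀ x ∈ spanE01ᗮ, (g : H2 →L[ℂ] H2) x = x}

def GTU (T : unitary (H2 →L[ℂ] H2)) : Subgroup (unitary (H2 →L[ℂ] H2)) :=
  Subgroup.closure ({T} ∪ U2)

lemma e_apply (k j : ℤ) : (e k : ∀ _ : ℤ, ℂ) j = if j = k then 1 else 0 := by
  rw [e, lp.single_apply]; split <;> simp_all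
lemma inner_e_left (k : ℤ) (x : H2) : ⟪e k, x⟫_ℂ = (x : ∀ _ : ℤ, ℂ) k := by
  rw [e, lp.inner_single_left]; simp [RCLike.inner_apply]
lemma inner_e_right (k : ℤ) (x : H2) : ⟪x, e k⟫_ℂ = starRingEnd ℂ ((x : ∀ _ : ℤ, ℂ) k) := by
  rw [e, lp.inner_single_right]; simp [RCLike.inner_apply]
def coord (k : ℤ) : H2 →L[ℂ] ℂ := innerSL ℂ (e k)
lemma coord_apply (k : ℤ) (x : H2) : coord k x = (x : ∀ _ : ℤ, ℂ) k := inner_e_left k x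

lemma norm_e (k : ℤ) : ‖e k‖ = 1 := by
  have : ‖lp.single (E := fun _ : ℤ => ℂ) 2 k ((fun _ => (1:ℂ)) k)‖ = ‖(1:ℂ)‖ :=
    lp.norm_single (E := fun _ : ℤ => ℂ) (by norm_num) k _
  simpa [e] using this

def RM (m00 m01 m10 m11 : ℂ) : H2 →L[ℂ] H2 :=
  1 + (ContinuousLinearMap.toSpanSingleton ℂ (e 0)).comp ((m00 - 1) • coord 0 + m01 • coord 1)
    + (ContinuousLinearMap.toSpanSingleton ℂ (e 1)).comp (m10 • coord 0 + (m11 - 1) • coord 1)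

lemma RM_apply (m00 m01 m10 m11 : ℂ) (x : H2) :
    RM m00 m01 m10 m11 x = x + ((m00 - 1) * (x : ∀ _ : ℤ, ℂ) 0 + m01 * (x : ∀ _ : ℤ, ℂ) 1) • e 0
      + (m10 * (x : ∀ _ : ℤ, ℂ) 0 + (m11 - 1) * (x : ∀ _ : ℤ, ℂ) 1) • e 1 := by
  simp only [RM, ContinuousLinearMap.add_apply, ContinuousLinearMap.one_apply,
    ContinuousLinearMap.comp_apply, ContinuousLinearMap.smul_apply, coord_apply,
    ContinuousLinearMap.toSpanSingleton_apply, smul_eq_mul]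

lemma RM_coord0 (m00 m01 m10 m11 : ℂ) (x : H2) :
    (RM m00 m01 m10 m11 x : ∀ _ : ℤ, ℂ) 0 = m00 * (x : ∀ _ : ℤ, ℂ) 0 + m01 * (x : ∀ _ : ℤ, ℂ) 1 := by
  rw [RM_apply]
  rw [lp.coeFn_add, lp.coeFn_add, lp.coeFn_smul, lp.coeFn_smul, Pi.add_apply, Pi.add_apply,
    Pi.smul_apply, Pi.smul_apply]
  simp [lp.coeFn_add, lp.coeFn_smul, e_apply]
  ring

lemma RM_coord1 (m00 m01 m10 m11 : ℂ) (x : H2) :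
    (RM m00 m01 m10 m11 x : ∀ _ : ℤ, ℂ) 1 = m10 * (x : ∀ _ : ℤ, ℂ) 0 + m11 * (x : ∀ _ : ℤ, ℂ) 1 := by
  rw [RM_apply]
  rw [lp.coeFn_add, lp.coeFn_add, lp.coeFn_smul, lp.coeFn_smul, Pi.add_apply, Pi.add_apply,
    Pi.smul_apply, Pi.smul_apply]
  simp [lp.coeFn_add, lp.coeFn_smul, e_apply]
  ring

lemma RM_coord_other (m00 m01 m10 m11 : ℂ) (x : H2) {k : ℤ} (h0 : k ≠ 0) (h1 : k ≠ 1) :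
    (RM m00 m01 m10 m11 x : ∀ _ : ℤ, ℂ) k = (x : ∀ _ : ℤ, ℂ) k := by
  rw [RM_apply]
  rw [lp.coeFn_add, lp.coeFn_add, lp.coeFn_smul, lp.coeFn_smul, Pi.add_apply, Pi.add_apply,
    Pi.smul_apply, Pi.smul_apply]
  simp [lp.coeFn_add, lp.coeFn_smul, e_apply, h0, h1]

lemma RM_mul (a b c d a' b' c' d' : ℂ) :
    RM a b c d * RM a' b' c' d' =
      RM (a * a' + b * c') (a * b' + b * d') (c * a' + d * c') (c * b' + d * d') := by
  refine ContinuousLinearMap.ext fun x => ?_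
  rw [ContinuousLinearMap.mul_apply, RM_apply a b c d, RM_coord0, RM_coord1,
    RM_apply a' b' c' d', RM_apply]
  module

lemma RM_one : RM 1 0 0 1 = 1 := by
  refine ContinuousLinearMap.ext fun x => ?_
  rw [RM_apply]
  simp

lemma RM_adjoint (m00 m01 m10 m11 : ℂ) :
    ContinuousLinearMap.adjoint (RM m00 m01 m10 m11) =
      RM (starRingEnd ℂ m00) (starRingEnd ℂ m10) (starRingEnd ℂ m01) (starRingEnd ℂ m11) := by
  symm
  rw [ContinuousLinearMap.eq_adjoint_iff]
  intro x y
  rw [RM_apply, RM_apply]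
  simp only [inner_add_left, inner_add_right, inner_smul_left, inner_smul_right,
    inner_e_left, inner_e_right, map_add, map_mul, map_sub, map_one, Complex.conj_conj]
  ring

lemma RM_mem_unitary (c0 c1 : ℂ) (h : c0 * starRingEnd ℂ c0 + c1 * starRingEnd ℂ c1 = 1) :
    RM (-c1) c0 (starRingEnd ℂ c0) (starRingEnd ℂ c1) ∈ unitary (H2 →L[ℂ] H2) := by
  have hstar : star (RM (-c1) c0 (starRingEnd ℂ c0) (starRingEnd ℂ c1)) =
      RM (-(starRingEnd ℂ c1)) c0 (starRingEnd ℂ c0) c1 := by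
    rw [ContinuousLinearMap.star_eq_adjoint, RM_adjoint]
    simp
  rw [Unitary.mem_iff, hstar, RM_mul, RM_mul]
  constructor
  · rw [show -starRingEnd ℂ c1 * -c1 + c0 * starRingEnd ℂ c0 = 1 by linear_combination h,
      show -starRingEnd ℂ c1 * c0 + c0 * starRingEnd ℂ c1 = 0 by ring,
      show starRingEnd ℂ c0 * -c1 + c1 * starRingEnd ℂ c0 = 0 by ring,
      show starRingEnd ℂ c0 * c0 + c1 * starRingEnd ℂ c1 = 1 by linear_combination h, RM_one]
  · rw [show -c1 * -starRingEnd ℂ c1 + c0 * starRingEnd ℂ c0 = 1 by linear_combination h,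
      show -c1 * c0 + c0 * c1 = 0 by ring,
      show starRingEnd ℂ c0 * -starRingEnd ℂ c1 + starRingEnd ℂ c1 * starRingEnd ℂ c0 = 0 by ring,
      show starRingEnd ℂ c0 * c0 + starRingEnd ℂ c1 * c1 = 1 by linear_combination h, RM_one]

def RMu (c0 c1 : ℂ) (h : c0 * starRingEnd ℂ c0 + c1 * starRingEnd ℂ c1 = 1) :
    unitary (H2 →L[ℂ] H2) :=
  ⟨RM (-c1) c0 (starRingEnd ℂ c0) (starRingEnd ℂ c1), RM_mem_unitary c0 c1 h⟩

lemma e0_mem_span : e 0 ∈ spanE01 := Submodule.subset_span (Set.mem_insert _ _)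
lemma e1_mem_span : e 1 ∈ spanE01 :=
  Submodule.subset_span (Set.mem_insert_of_mem _ (Set.mem_singleton _))

lemma RMu_mem_U2 (c0 c1 : ℂ) (h : c0 * starRingEnd ℂ c0 + c1 * starRingEnd ℂ c1 = 1) :
    RMu c0 c1 h ∈ U2 := by
  constructor
  · intro x hx
    show RM _ _ _ _ x ∈ spanE01
    rw [RM_apply]
    exact Submodule.add_mem _ (Submodule.add_mem _ hx (Submodule.smul_mem _ _ e0_mem_span))
      (Submodule.smul_mem _ _ e1_mem_span)
  · intro x hx
    show RM _ _ _ _ x = x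
    have h0 : (x : ∀ _ : ℤ, ℂ) 0 = 0 := by
      rw [← inner_e_left]
      exact (Submodule.mem_orthogonal _ x).mp hx (e 0) e0_mem_span
    have h1 : (x : ∀ _ : ℤ, ℂ) 1 = 0 := by
      rw [← inner_e_left]
      exact (Submodule.mem_orthogonal _ x).mp hx (e 1) e1_mem_span
    rw [RM_apply, h0, h1]
    simp

lemma RMu_mem_GTU (T : unitary (H2 →L[ℂ] H2)) (c0 c1 : ℂ)
    (h : c0 * starRingEnd ℂ c0 + c1 * starRingEnd ℂ c1 = 1) : RMu c0 c1 h ∈ GTU T :=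
  Subgroup.subset_closure (Or.inr (RMu_mem_U2 c0 c1 h))

lemma T_mem_GTU (T : unitary (H2 →L[ℂ] H2)) : T ∈ GTU T :=
  Subgroup.subset_closure (Or.inl rfl)

lemma coe_mul_apply (g h : unitary (H2 →L[ℂ] H2)) (x : H2) :
    ((g * h : unitary (H2 →L[ℂ] H2)) : H2 →L[ℂ] H2) x = (g : H2 →L[ℂ] H2) ((h : H2 →L[ℂ] H2) x) := by
  rfl

lemma coe_inv_coe (g : unitary (H2 →L[ℂ] H2)) (x : H2) :
    ((g⁻¹ : unitary (H2 →L[ℂ] H2)) : H2 →L[ℂ] H2) ((g : H2 →L[ℂ] H2) x) = x := by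
  rw [← coe_mul_apply, inv_mul_cancel]
  rfl

lemma inner_unitary_right (g : unitary (H2 →L[ℂ] H2)) (x y : H2) :
    ⟪x, (g : H2 →L[ℂ] H2) y⟫_ℂ = ⟪((g⁻¹ : unitary (H2 →L[ℂ] H2)) : H2 →L[ℂ] H2) x, y⟫_ℂ := by
  rw [← Unitary.star_eq_inv, Unitary.coe_star, ContinuousLinearMap.star_eq_adjoint,
    ContinuousLinearMap.adjoint_inner_left]

lemma unitary_inner_map (g : unitary (H2 →L[ℂ] H2)) (x y : H2) :
    ⟪(g : H2 →L[ℂ] H2) x, (g : H2 →L[ℂ] H2) y⟫_ℂ = ⟪x, y⟫_ℂ := by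
  rw [inner_unitary_right, coe_inv_coe]

lemma unitary_norm_map (g : unitary (H2 →L[ℂ] H2)) (x : H2) :
    ‖(g : H2 →L[ℂ] H2) x‖ = ‖x‖ := by
  have h := unitary_inner_map g x x
  rw [inner_self_eq_norm_sq_to_K, inner_self_eq_norm_sq_to_K] at h
  have h' : ‖(g : H2 →L[ℂ] H2) x‖ ^ 2 = ‖x‖ ^ 2 := by exact_mod_cast h
  nlinarith [norm_nonneg ((g : H2 →L[ℂ] H2) x), norm_nonneg x]

section Shift
variable (T : unitary (H2 →L[ℂ] H2)) (hT : ∀ k : ℤ, (T : H2 →L[ℂ] H2) (e k) = e (k + 1))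

include hT

lemma Tinv_e (k : ℤ) : ((T⁻¹ : unitary (H2 →L[ℂ] H2)) : H2 →L[ℂ] H2) (e k) = e (k - 1) := by
  have h := coe_inv_coe T (e (k - 1))
  rw [hT (k - 1), sub_add_cancel] at h
  exact h

lemma Tzpow_e (n : ℤ) (k : ℤ) :
    ((T ^ n : unitary (H2 →L[ℂ] H2)) : H2 →L[ℂ] H2) (e k) = e (k + n) := by
  induction n using Int.induction_on with
  | zero => rw [zpow_zero, add_zero, OneMemClass.coe_one, ContinuousLinearMap.one_apply]
  | succ n ih =>
    rw [show ((n : ℤ) + 1) = 1 + n by ring, zpow_add, coe_mul_apply, ih, zpow_one, hT]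
    congr 1; ring
  | pred n ih =>
    rw [show (-(n : ℤ) - 1) = (-1) + -n by ring, zpow_add, coe_mul_apply, ih, zpow_neg_one,
      Tinv_e T hT]
    congr 1; ring

lemma Tzpow_coord (n : ℤ) (v : H2) (k : ℤ) :
    (((T ^ n : unitary (H2 →L[ℂ] H2)) : H2 →L[ℂ] H2) v : ∀ _ : ℤ, ℂ) k = (v : ∀ _ : ℤ, ℂ) (k - n) := by
  rw [← inner_e_left, inner_unitary_right, ← zpow_neg, Tzpow_e T hT, inner_e_left]
  congr 1

end Shift

section Main
variable (T : unitary (H2 →L[ℂ] H2)) (hT : ∀ k : ℤ, (T : H2 →L[ℂ] H2) (e k) = e (k + 1))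
include hT

lemma reduce : ∀ n : ℕ, ∀ v : H2, ‖v‖ = 1 →
    (∀ k : ℤ, (k < 0 ∨ (n : ℤ) + 1 ≤ k) → (v : ∀ _ : ℤ, ℂ) k = 0) →
    ∃ g ∈ GTU T, (g : H2 →L[ℂ] H2) v = e 0 := by
  intro n
  induction n with
  | zero =>
    intro v hv hsupp
    have hv1 : (v : ∀ _ : ℤ, ℂ) 1 = 0 := hsupp 1 (Or.inr (by norm_num))
    have hveq : v = (v : ∀ _ : ℤ, ℂ) 0 • e 0 := by
      apply lp.ext
      funext k
      rw [lp.coeFn_smul, Pi.smul_apply, e_apply, smul_eq_mul]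
      by_cases hk : k = 0
      · subst hk; simp
      · rw [if_neg hk, mul_zero]
        exact hsupp k (by omega)
    have hnorm : ‖(v : ∀ _ : ℤ, ℂ) 0‖ = 1 := by
      calc ‖(v : ∀ _ : ℤ, ℂ) 0‖ = ‖(v : ∀ _ : ℤ, ℂ) 0 • e 0‖ := by
            rw [norm_smul, norm_e, mul_one]
        _ = ‖v‖ := by rw [← hveq]
        _ = 1 := hv
    have hc : (v : ∀ _ : ℤ, ℂ) 0 * starRingEnd ℂ ((v : ∀ _ : ℤ, ℂ) 0)
        + 0 * starRingEnd ℂ 0 = 1 := by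
      rw [zero_mul, add_zero, Complex.mul_conj]
      norm_cast
      rw [Complex.normSq_eq_norm_sq, hnorm]
      norm_num
    refine ⟨T⁻¹ * RMu _ _ hc, mul_mem (inv_mem (T_mem_GTU T)) (RMu_mem_GTU T _ _ hc), ?_⟩
    have h1 : ((RMu ((v : ∀ _ : ℤ, ℂ) 0) 0 hc : unitary (H2 →L[ℂ] H2)) : H2 →L[ℂ] H2) v
        = e 1 := by
      apply lp.ext
      funext k
      show (RM _ _ _ _ v : ∀ _ : ℤ, ℂ) k = (e 1 : ∀ _ : ℤ, ℂ) k
      by_cases h0 : k = 0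
      · subst h0
        rw [RM_coord0, e_apply, hv1]
        norm_num
      · by_cases h1k : k = 1
        · subst h1k
          rw [RM_coord1, e_apply, if_pos rfl, hv1, mul_zero, add_zero]
          linear_combination hc
        · rw [RM_coord_other _ _ _ _ _ h0 h1k, e_apply, if_neg h1k]
          exact hsupp k (by omega)
    rw [coe_mul_apply, h1, Tinv_e T hT]
    norm_num
  | succ n ih =>
    intro v hv hsupp
    by_cases hz : (v : ∀ _ : ℤ, ℂ) 0 = 0 ∧ (v : ∀ _ : ℤ, ℂ) 1 = 0
    · -- both head coefficients vanish: just shift down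
      have hw : ∀ k : ℤ, (k < 0 ∨ (n : ℤ) + 1 ≤ k) →
          ((((T ^ (-1 : ℤ) : unitary (H2 →L[ℂ] H2)) : H2 →L[ℂ] H2) v : H2) : ∀ _ : ℤ, ℂ) k = 0 := by
        intro k hk
        rw [Tzpow_coord T hT, show k - (-1 : ℤ) = k + 1 by ring]
        rcases hk with hk | hk
        · rcases eq_or_lt_of_le (by omega : k + 1 ≤ 0) with h | h
          · rw [h]; exact hz.1
          · exact hsupp (k + 1) (Or.inl h)
        · exact hsupp (k + 1) (Or.inr (by omega))
      obtain ⟨g, hg, hge⟩ := ih _ (by rw [unitary_norm_map]; exact hv) hw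
      refine ⟨g * T ^ (-1 : ℤ), mul_mem hg (zpow_mem (T_mem_GTU T) _), ?_⟩
      rw [coe_mul_apply, hge]
    · -- fold coefficients 0 and 1 into position 1, then shift down
      have hρ : 0 < ‖(v : ∀ _ : ℤ, ℂ) 0‖ ^ 2 + ‖(v : ∀ _ : ℤ, ℂ) 1‖ ^ 2 := by
        rcases not_and_or.mp hz with h | h
        · have := norm_pos_iff.mpr h
          nlinarith [sq_nonneg ‖(v : ∀ _ : ℤ, ℂ) 1‖]
        · have := norm_pos_iff.mpr h
          nlinarith [sq_nonneg ‖(v : ∀ _ : ℤ, ℂ) 0‖]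
      set ρ : ℝ := ‖(v : ∀ _ : ℤ, ℂ) 0‖ ^ 2 + ‖(v : ∀ _ : ℤ, ℂ) 1‖ ^ 2 with hρdef
      set r : ℝ := Real.sqrt ρ with hrdef
      have hr : 0 < r := Real.sqrt_pos.mpr hρ
      have hr2 : r * r = ρ := Real.mul_self_sqrt hρ.le
      have hu : ((v : ∀ _ : ℤ, ℂ) 0 / (r : ℂ)) * starRingEnd ℂ ((v : ∀ _ : ℤ, ℂ) 0 / (r : ℂ))
          + ((v : ∀ _ : ℤ, ℂ) 1 / (r : ℂ)) * starRingEnd ℂ ((v : ∀ _ : ℤ, ℂ) 1 / (r : ℂ)) = 1 := by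
        simp only [map_div₀, Complex.conj_ofReal]
        rw [div_mul_div_comm, div_mul_div_comm, ← add_div, Complex.mul_conj,
          Complex.mul_conj, ← Complex.ofReal_mul, hr2]
        have hsum : Complex.normSq ((v : ∀ _ : ℤ, ℂ) 0) + Complex.normSq ((v : ∀ _ : ℤ, ℂ) 1)
            = ρ := by
          rw [Complex.normSq_eq_norm_sq, Complex.normSq_eq_norm_sq]
        rw [← Complex.ofReal_add, hsum, div_self (Complex.ofReal_ne_zero.mpr hρ.ne')]
      set g1 := RMu _ _ hu with hg1def
      have hg1v0 : (((g1 : unitary (H2 →L[ℂ] H2)) : H2 →L[ℂ] H2) v : ∀ _ : ℤ, ℂ) 0 = 0 := by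
        show (RM _ _ _ _ v : ∀ _ : ℤ, ℂ) 0 = 0
        rw [RM_coord0]
        ring
      have hg1k : ∀ k : ℤ, k ≠ 0 → k ≠ 1 →
          (((g1 : unitary (H2 →L[ℂ] H2)) : H2 →L[ℂ] H2) v : ∀ _ : ℤ, ℂ) k = (v : ∀ _ : ℤ, ℂ) k :=
        fun k h0 h1 => RM_coord_other _ _ _ _ _ h0 h1
      have hw : ∀ k : ℤ, (k < 0 ∨ (n : ℤ) + 1 ≤ k) →
          ((((T ^ (-1 : ℤ) : unitary (H2 →L[ℂ] H2)) : H2 →L[ℂ] H2)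
            ((g1 : H2 →L[ℂ] H2) v) : H2) : ∀ _ : ℤ, ℂ) k = 0 := by
        intro k hk
        rw [Tzpow_coord T hT, show k - (-1 : ℤ) = k + 1 by ring]
        rcases hk with hk | hk
        · rcases eq_or_lt_of_le (by omega : k + 1 ≤ 0) with h | h
          · rw [h]; exact hg1v0
          · rw [hg1k (k + 1) (by omega) (by omega)]
            exact hsupp (k + 1) (Or.inl h)
        · rw [hg1k (k + 1) (by omega) (by omega)]
          exact hsupp (k + 1) (Or.inr (by omega))
      obtain ⟨g, hg, hge⟩ := ih _ (by rw [unitary_norm_map, unitary_norm_map]; exact hv) hw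
      refine ⟨g * (T ^ (-1 : ℤ) * g1),
        mul_mem hg (mul_mem (zpow_mem (T_mem_GTU T) _) (RMu_mem_GTU T _ _ hu)), ?_⟩
      rw [coe_mul_apply, coe_mul_apply, hge]

end Main

section Main2
variable (T : unitary (H2 →L[ℂ] H2)) (hT : ∀ k : ℤ, (T : H2 →L[ℂ] H2) (e k) = e (k + 1))
include hT

lemma reduce' (m : ℤ) (n : ℕ) (v : H2) (hv : ‖v‖ = 1)
    (hsupp : ∀ k : ℤ, (k < m ∨ m + n + 1 ≤ k) → (v : ∀ _ : ℤ, ℂ) k = 0) :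
    ∃ g ∈ GTU T, (g : H2 →L[ℂ] H2) v = e 0 := by
  have hw : ∀ k : ℤ, (k < 0 ∨ (n : ℤ) + 1 ≤ k) →
      ((((T ^ (-m) : unitary (H2 →L[ℂ] H2)) : H2 →L[ℂ] H2) v : H2) : ∀ _ : ℤ, ℂ) k = 0 := by
    intro k hk
    rw [Tzpow_coord T hT]
    exact hsupp _ (by omega)
  obtain ⟨g, hg, hge⟩ := reduce T hT n _ (by rw [unitary_norm_map]; exact hv) hw
  exact ⟨g * T ^ (-m), mul_mem hg (zpow_mem (T_mem_GTU T) _), by rw [coe_mul_apply, hge]⟩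

end Main2

lemma approx (b : H2) (hb : ‖b‖ = 1) (ε : ℝ) (hε : 0 < ε) (hε1 : ε ≤ 1) :
    ∃ (v : H2) (m : ℤ) (n : ℕ), ‖v‖ = 1 ∧
      (∀ k : ℤ, (k < m ∨ m + n + 1 ≤ k) → (v : ∀ _ : ℤ, ℂ) k = 0) ∧ ‖b - v‖ < ε := by
  have hs := lp.hasSum_single (E := fun _ : ℤ => ℂ) (p := 2) (by norm_num) b
  have ht := Metric.tendsto_nhds.mp hs (ε/2) (by positivity)
  obtain ⟨s, hs2⟩ := ht.exists
  set w : H2 := ∑ i ∈ s, lp.single 2 i ((b : ∀ _ : ℤ, ℂ) i) with hwdef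
  have hdist : ‖b - w‖ < ε / 2 := by
    rw [← dist_eq_norm, dist_comm]
    exact hs2
  have hwcoord : ∀ k : ℤ, k ∉ s → (w : ∀ _ : ℤ, ℂ) k = 0 := by
    intro k hk
    rw [hwdef, lp.coeFn_sum, Finset.sum_apply]
    refine Finset.sum_eq_zero fun i hi => ?_
    exact lp.single_apply_ne 2 i _ (fun h => hk (h ▸ hi))
  set N : ℕ := s.sup (fun i => i.natAbs) with hNdef
  have hsup : ∀ k : ℤ, (k < -(N : ℤ) ∨ -(N : ℤ) + (2 * N : ℕ) + 1 ≤ k) →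
      (w : ∀ _ : ℤ, ℂ) k = 0 := by
    intro k hk
    refine hwcoord k fun hk' => ?_
    have h := Finset.le_sup (f := fun i : ℤ => i.natAbs) hk'
    rw [← hNdef] at h
    have h2 : k.natAbs ≤ N := h
    push_cast at hk
    omega
  have hw0 : (0 : ℝ) < ‖w‖ := by
    have h1 : ‖b‖ - ‖w‖ ≤ ‖b - w‖ := by
      have := abs_norm_sub_norm_le b w
      rw [abs_le] at this
      linarith [this.2]
    linarith
  refine ⟨((‖w‖ : ℂ))⁻¹ • w, -(N : ℤ), 2 * N, ?_, ?_, ?_⟩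
  · rw [norm_smul, norm_inv, Complex.norm_real, Real.norm_of_nonneg hw0.le,
      inv_mul_cancel₀ hw0.ne']
  · intro k hk
    rw [lp.coeFn_smul, Pi.smul_apply, hsup k hk, smul_zero]
  · have hwv : ‖w - (((‖w‖ : ℂ))⁻¹ • w)‖ = |‖w‖ - 1| := by
      have : w - (((‖w‖ : ℂ))⁻¹ • w) = ((1 : ℂ) - ((‖w‖ : ℂ))⁻¹) • w := by
        rw [sub_smul, one_smul]
      rw [this, norm_smul]
      have h2 : ((1 : ℂ) - ((‖w‖ : ℂ))⁻¹) = (((1 - ‖w‖⁻¹ : ℝ)) : ℂ) := by push_cast; ring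
      rw [h2, Complex.norm_real, Real.norm_eq_abs]
      have h6 : |1 - ‖w‖⁻¹| * ‖w‖ = |(1 - ‖w‖⁻¹) * ‖w‖| := by
        rw [abs_mul, abs_of_pos hw0]
      rw [h6]
      congr 1
      field_simp
    have h3 : |‖w‖ - 1| < ε / 2 := by
      have h4 := abs_norm_sub_norm_le w b
      rw [hb] at h4
      calc |‖w‖ - 1| ≤ ‖w - b‖ := h4
        _ = ‖b - w‖ := by rw [norm_sub_rev]
        _ < ε / 2 := hdist
    calc ‖b - (((‖w‖ : ℂ))⁻¹ • w)‖ ≤ ‖b - w‖ + ‖w - (((‖w‖ : ℂ))⁻¹ • w)‖ := by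
          have := norm_sub_le_norm_sub_add_norm_sub b w (((‖w‖ : ℂ))⁻¹ • w)
          exact this
      _ < ε / 2 + ε / 2 := by rw [hwv]; exact add_lt_add hdist h3
      _ = ε := by ring

theorem stmt0 (T : unitary (H2 →L[ℂ] H2))
    (hT : ∀ k : ℤ, (T : H2 →L[ℂ] H2) (e k) = e (k + 1))
    (a : H2) (ha : ‖a‖ = 1) :
    ∀ b ∈ Metric.sphere (0 : H2) 1,
      b ∈ closure {x : H2 | ∃ g ∈ GTU T, (g : H2 →L[ℂ] H2) a = x} := by
  intro b hb
  rw [Metric.mem_closure_iff]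
  intro ε hε
  have hb' : ‖b‖ = 1 := by simpa using mem_sphere_zero_iff_norm.mp hb
  have hδ : 0 < min (ε / 2) 1 := lt_min (by positivity) one_pos
  obtain ⟨v, m, n, hvn, hvs, hva⟩ := approx a ha _ hδ (min_le_right _ _)
  obtain ⟨w, m', n', hwn, hws, hwb⟩ := approx b hb' _ hδ (min_le_right _ _)
  obtain ⟨g1, hg1, hg1e⟩ := reduce' T hT m n v hvn hvs
  obtain ⟨g2, hg2, hg2e⟩ := reduce' T hT m' n' w hwn hws
  refine ⟨((g2⁻¹ * g1 : unitary (H2 →L[ℂ] H2)) : H2 →L[ℂ] H2) a,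
    ⟨g2⁻¹ * g1, mul_mem (inv_mem hg2) hg1, rfl⟩, ?_⟩
  have hgv : ((g2⁻¹ * g1 : unitary (H2 →L[ℂ] H2)) : H2 →L[ℂ] H2) v = w := by
    rw [coe_mul_apply, hg1e, ← hg2e, coe_inv_coe]
  calc dist b (((g2⁻¹ * g1 : unitary (H2 →L[ℂ] H2)) : H2 →L[ℂ] H2) a)
      ≤ dist b w + dist w (((g2⁻¹ * g1 : unitary (H2 →L[ℂ] H2)) : H2 →L[ℂ] H2) a) :=
        dist_triangle _ _ _
    _ = ‖b - w‖ + ‖a - v‖ := by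
        have h5 : dist w (((g2⁻¹ * g1 : unitary (H2 →L[ℂ] H2)) : H2 →L[ℂ] H2) a) = ‖a - v‖ := by
          rw [← hgv, dist_eq_norm, ← map_sub, unitary_norm_map, norm_sub_rev]
        rw [dist_eq_norm b w, h5]
    _ < min (ε / 2) 1 + min (ε / 2) 1 := add_lt_add hwb hva
    _ ≤ ε / 2 + ε / 2 := add_le_add (min_le_left _ _) (min_le_left _ _)
    _ = ε := by ring
end
end

section
/- No continuous linear operator on a finite-dimensional complex normed vector space is hypercyclic: for every linear operator T on a finite-dimensional complex normed space X and every x ∈ X, the set {Tⁿx : n ∈ ℕ} is not dense in X. -/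
/-- No continuous linear operator on a (nontrivial) finite-dimensional complex
normed vector space is hypercyclic: no orbit `{Tⁿ x : n ∈ ℕ}` is dense. -/
theorem stmt10 (X : Type*) [NormedAddCommGroup X] [NormedSpace ℂ X]
    [FiniteDimensional ℂ X] [Nontrivial X]
    (T : X →L[ℂ] X) (x : X) :
    ¬ Dense {y : X | ∃ n : ℕ, (T ^ n) x = y} := by
  intro hd
  -- the transpose of `T` on the dual has an eigenvalue
  obtain ⟨c, hc⟩ :=
    Module.End.exists_eigenvalue (Module.Dual.transpose (R := ℂ) T.toLinearMap)
  obtain ⟨φ, hφ⟩ := hc.exists_hasEigenvector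
  have hφapply : ∀ y : X, φ (T y) = c * φ y := by
    intro y
    have := hφ.apply_eq_smul
    rw [Module.Dual.transpose_apply] at this
    have := congrArg (fun ψ => ψ y) this
    simpa using this
  have hφne : φ ≠ 0 := hφ.right
  -- φ(Tⁿ x) = cⁿ * φ x
  have hkey : ∀ n : ℕ, φ ((T ^ n) x) = c ^ n * φ x := by
    intro n
    induction n with
    | zero => simp
    | succ n ih =>
      have : (T ^ (n + 1)) x = T ((T ^ n) x) := by
        rw [pow_succ']; rfl
      rw [this, hφapply, ih, pow_succ']
      ring
  -- φ is continuous and surjective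
  have hcont : Continuous φ := φ.continuous_of_finiteDimensional
  obtain ⟨z, hz⟩ : ∃ z : X, φ z ≠ 0 := by
    by_contra h
    push_neg at h
    exact hφne (LinearMap.ext fun y => by simpa using h y)
  have hsurj : ∀ w : ℂ, ∃ y : X, φ y = w := by
    intro w
    exact ⟨(w / φ z) • z, by rw [map_smul, smul_eq_mul, div_mul_cancel₀ _ hz]⟩
  -- hence the image of the orbit under φ is dense in ℂ
  set S : Set X := {y : X | ∃ n : ℕ, (T ^ n) x = y}
  have himdense : Dense (φ '' S) := by
    intro w
    obtain ⟨y, hy⟩ := hsurj w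
    have hy' : y ∈ closure S := hd y
    have := image_closure_subset_closure_image (f := φ) hcont (Set.mem_image_of_mem φ hy')
    rwa [hy] at this
  -- the image is {cⁿ * φ x}, which cannot be dense in ℂ
  have him : ∀ w ∈ φ '' S, ∃ n : ℕ, w = c ^ n * φ x := by
    rintro w ⟨y, ⟨n, hn⟩, rfl⟩
    exact ⟨n, by rw [← hn, hkey]⟩
  by_cases hbx : φ x = 0
  · -- image is {0}, not dense
    have h1 := Metric.mem_closure_iff.mp (himdense 1) (1/2) (by norm_num)
    obtain ⟨w, hw, hdist⟩ := h1
    obtain ⟨n, rfl⟩ := him w hw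
    rw [hbx, mul_zero] at hdist
    norm_num [dist_eq_norm] at hdist
  · by_cases hcle : ‖c‖ ≤ 1
    · -- image bounded by ‖φ x‖
      set r := ‖φ x‖
      have h1 := Metric.mem_closure_iff.mp (himdense ((r + 2 : ℝ) : ℂ)) 1 one_pos
      obtain ⟨w, hw, hdist⟩ := h1
      obtain ⟨n, rfl⟩ := him w hw
      have hwnorm : ‖c ^ n * φ x‖ ≤ r := by
        rw [norm_mul, norm_pow]
        calc ‖c‖ ^ n * r ≤ 1 ^ n * r := by
              apply mul_le_mul_of_nonneg_right (pow_le_pow_left₀ (norm_nonneg c) hcle n)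
                (norm_nonneg _)
          _ = r := by ring
      have hzn : ‖((r + 2 : ℝ) : ℂ)‖ = r + 2 := by
        rw [Complex.norm_real, Real.norm_eq_abs, abs_of_nonneg]
        positivity
      have := norm_sub_norm_le ((r + 2 : ℝ) : ℂ) (c ^ n * φ x)
      rw [hzn] at this
      rw [dist_eq_norm] at hdist
      linarith
    · -- ‖c‖ > 1, image bounded away from 0
      push_neg at hcle
      set r := ‖φ x‖
      have hr : 0 < r := norm_pos_iff.mpr hbx
      have h1 := Metric.mem_closure_iff.mp (himdense 0) (r / 2) (by positivity)
      obtain ⟨w, hw, hdist⟩ := h1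
      obtain ⟨n, rfl⟩ := him w hw
      have hwnorm : r ≤ ‖c ^ n * φ x‖ := by
        rw [norm_mul, norm_pow]
        calc r = 1 * r := (one_mul r).symm
          _ ≤ ‖c‖ ^ n * r := by
              apply mul_le_mul_of_nonneg_right (one_le_pow₀ hcle.le) hr.le
      rw [dist_eq_norm, zero_sub, norm_neg] at hdist
      linarith
end
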